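/- arXiv:0810.5256 — 3 statements merged into one kernel-verified Lean document; each statement's English description precedes it below -/
import Mathlib

section
/- Let r ≥ 1, a ≥ 0, b ≥ 0 be integers, and set p = (r−1)a + b + 2, s = 1 + (r−1)a/2 + b (a rational number) and n = r·s = r + r(r−1)a/2 + rb (a positive integer). Then there exists a monic polynomial Q with real coefficients of degree n such that for every real x ≥ 0, Q(x) = ∏_{j=1}^{r} Γ(x + p − (j−1)a/2) / Γ(x + p − s − (j−1)a/2), where Γ is the Euler Gamma function. -/
/-! Pair the numerator of the factor `r - 1 - j` with the denominator of the factor `j`: their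
arguments differ by the integer `j * a + b + 1` (within a single factor the gap is `s`, which may be
half-integral), so each such ratio is a shifted rising factorial `Γ(z + m) / Γ(z)` with `z > 0`.
The degrees `j * a + b + 1` add up to `r * s = n`. -/

open Finset Polynomial

theorem Real.Gamma_add_nat_div_Gamma_eq {n : ℕ} (z : ℝ) (hz : ∀ k : ℕ, z ≠ -k) :
    Real.Gamma (z + n) / Real.Gamma z = (ascPochhammer ℝ n).eval z := by
  induction n with
  | zero => simp [div_self (Real.Gamma_ne_zero hz)]
  | succ n ih =>
    have hzn : z + n ≠ 0 := fun h => hz n (by linarith)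
    rw [Nat.cast_succ, ← add_assoc, Real.Gamma_add_one hzn, ascPochhammer_succ_right, eval_mul,
      ← ih, eval_add, eval_X, eval_natCast]
    ring

theorem eval_ascPochhammer_comp_X_add_C_eq_Gamma_div {c x : ℝ} (hxc : 0 < x + c) (m : ℕ) :
    ((ascPochhammer ℝ m).comp (X + C c)).eval x = Real.Gamma (x + c + m) / Real.Gamma (x + c) := by
  rw [eval_comp, eval_add, eval_X, eval_C, Real.Gamma_add_nat_div_Gamma_eq]
  intro k hk
  linarith [(Nat.cast_nonneg k : (0:ℝ) ≤ k)]

theorem monic_ascPochhammer_comp_X_add_C (c : ℝ) (m : ℕ) :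
    ((ascPochhammer ℝ m).comp (X + C c)).Monic :=
  (monic_ascPochhammer ℝ m).comp_X_add_C c

theorem natDegree_ascPochhammer_comp_X_add_C (c : ℝ) (m : ℕ) :
    ((ascPochhammer ℝ m).comp (X + C c)).natDegree = m := by
  rw [natDegree_comp, ascPochhammer_natDegree, natDegree_X_add_C, mul_one]

theorem Finset.prod_range_div_reflect {M : Type*} [DivisionCommMonoid M] (f g : ℕ → M) (r : ℕ) :
    ∏ j ∈ range r, f j / g j = ∏ j ∈ range r, f (r - 1 - j) / g j := by
  rw [prod_div_distrib, prod_div_distrib, prod_range_reflect f r]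

theorem sum_range_mul_add_add_one (r a b : ℕ) :
    ∑ j ∈ range r, ((j : ℚ) * a + b + 1) = r * (1 + ((r : ℚ) - 1) * a / 2 + b) := by
  induction r with
  | zero => simp
  | succ r ih => rw [sum_range_succ, ih]; push_cast; ring

theorem stmt_2_general (r a b : ℕ)
    (p : ℕ) (hp : p = (r - 1) * a + b + 2)
    (s : ℚ) (hs : s = 1 + ((r : ℚ) - 1) * a / 2 + b)
    (n : ℕ) (hn : (n : ℚ) = r * s) :
    ∃ Q : Polynomial ℝ, Q.Monic ∧ Q.natDegree = n ∧
      ∀ x : ℝ, 0 ≤ x →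
        Q.eval x = ∏ j ∈ Finset.range r,
          Real.Gamma (x + p - j * a / 2) / Real.Gamma (x + p - (s : ℝ) - j * a / 2) := by
  refine ⟨∏ j ∈ range r,
      (ascPochhammer ℝ (j * a + b + 1)).comp (X + C (1 + ((r - 1 - j : ℕ) : ℝ) * a / 2)),
    monic_prod_of_monic _ _ fun j _ => monic_ascPochhammer_comp_X_add_C _ _, ?_, ?_⟩
  · rw [natDegree_prod_of_monic _ _ fun j _ => monic_ascPochhammer_comp_X_add_C _ _]
    simp only [natDegree_ascPochhammer_comp_X_add_C]
    exact_mod_cast (sum_range_mul_add_add_one r a b).trans (hs ▸ hn).symm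
  · intro x hx
    rw [eval_prod, prod_range_div_reflect]
    refine prod_congr rfl fun j hj => ?_
    have hjr : 1 + j ≤ r := by have := mem_range.mp hj; omega
    have hpR : (p : ℝ) = ((r : ℝ) - 1) * a + b + 2 := by
      rw [hp]; push_cast [Nat.cast_sub (le_of_add_le_left hjr)]; ring
    have hsR : (s : ℝ) = 1 + ((r : ℝ) - 1) * a / 2 + b := by
      rw [hs]; push_cast; ring
    have hrj : ((r - 1 - j : ℕ) : ℝ) = r - 1 - j := by
      rw [Nat.sub_sub, Nat.cast_sub hjr]; push_cast; ring
    rw [eval_ascPochhammer_comp_X_add_C_eq_Gamma_div (by positivity)]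
    congr 2 <;> push_cast [hrj, hpR, hsR] <;> ring

/-- The generalized Pochhammer symbol `[x + p - n/r]_{n/r}`, written as a product of
ratios of Gamma functions, is a monic polynomial of degree `n` in `x`. -/
theorem stmt_2 (r a b : ℕ) (hr : 1 ≤ r)
    (p : ℕ) (hp : p = (r - 1) * a + b + 2)
    (s : ℚ) (hs : s = 1 + ((r : ℚ) - 1) * a / 2 + b)
    (n : ℕ) (hn : (n : ℚ) = r * s) :
    ∃ Q : Polynomial ℝ, Q.Monic ∧ Q.natDegree = n ∧
      ∀ x : ℝ, 0 ≤ x →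
        Q.eval x = ∏ j ∈ Finset.range r,
          Real.Gamma (x + p - j * a / 2) / Real.Gamma (x + p - (s : ℝ) - j * a / 2) :=
  stmt_2_general r a b p hp s hs n hn
end

section
/- Let n ≥ 1 and μ ≥ 1 be integers. Then there exist real constants c_0, …, c_n, with c_n = (−1)^{n+1} · μ^n, such that for all z, w ∈ ℂ^n and λ, β ∈ ℂ satisfying |λ|² (1+‖z‖²)^μ < 1 and |β|² (1+‖w‖²)^μ < 1, the series ∑_{ν=0}^∞ C(μν+n, n) · (1 + ⟪z, w⟫)^{μν} · (λ · conj(β))^ν converges and equals ∑_{m=0}^{n} c_m · (λ · conj(β) · (1 + ⟪z, w⟫)^μ − 1)^{−(m+1)}. Here C(μν+n, n) is the binomial coefficient, ⟪z, w⟫ = ∑_{i=1}^n z_i · conj(w_i), and ‖z‖² = ∑_{i=1}^n |z_i|². -/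
/-!
As a function of `ν`, `(μ ν + n).choose n` is a polynomial of degree `n` with leading coefficient
`μⁿ / n!`, hence a combination `∑ₘ aₘ (ν + m).choose m` of the binomial basis with `aₙ = μⁿ`.
Put `t = λ β̄ (1 + ⟪z, w⟫)^μ`; Cauchy–Schwarz for `(1, z)` and `(1, w)` gives `‖t‖ < 1`, and then
`∑_ν (ν + m).choose m * t^ν = (1 - t)^{-(m+1)}` turns the series into the stated finite sum.
-/

open Polynomial Finset Nat ComplexConjugate

namespace Polynomial

variable {K : Type*} [Field K]

theorem exists_eq_sum_C_mul_of_natDegree_le {q : ℕ → K[X]} (hdeg : ∀ m, (q m).natDegree ≤ m)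
    (hcoeff : ∀ m, (q m).coeff m ≠ 0) (N : ℕ) (p : K[X]) (hp : p.natDegree ≤ N) :
    ∃ a : ℕ → K, a N = p.coeff N / (q N).coeff N ∧ p = ∑ m ∈ range (N + 1), C (a m) * q m := by
  induction N generalizing p with
  | zero =>
    refine ⟨fun _ => p.coeff 0 / (q 0).coeff 0, rfl, ?_⟩
    have hq0 := eq_C_of_natDegree_le_zero (hdeg 0)
    rw [sum_range_one, hq0, ← C_mul, coeff_C_zero, div_mul_cancel₀ _ (hq0 ▸ hcoeff 0)]
    exact eq_C_of_natDegree_le_zero hp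
  | succ N ih =>
    set k := p.coeff (N + 1) / (q (N + 1)).coeff (N + 1)
    have hr : (p - C k * q (N + 1)).natDegree ≤ N := by
      have hkq : (C k * q (N + 1)).natDegree ≤ N + 1 := (natDegree_C_mul_le _ _).trans (hdeg _)
      refine natDegree_le_pred (n := N + 1) ((natDegree_sub_le _ _).trans (max_le hp hkq)) ?_
      rw [coeff_sub, coeff_C_mul, div_mul_cancel₀ _ (hcoeff _), sub_self]
    obtain ⟨a, -, ha⟩ := ih _ hr
    refine ⟨Function.update a (N + 1) k, by simp, ?_⟩
    rw [sum_range_succ, Function.update_self, sum_congr rfl fun m hm =>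
      by rw [Function.update_of_ne (mem_range.1 hm).ne], ← ha, sub_add_cancel]

variable (K) in
noncomputable def binomialPoly (a m : ℕ) : K[X] :=
  C (m ! : K)⁻¹ * ∏ j ∈ range m, (C (a : K) * X + C ((j : K) + 1))

theorem natDegree_binomialPoly_le (a m : ℕ) : (binomialPoly K a m).natDegree ≤ m :=
  (natDegree_C_mul_le _ _).trans <| (natDegree_prod_le _ _).trans <|
    (sum_le_card_nsmul _ _ 1 fun _ _ => natDegree_linear_le).trans (by simp)

theorem coeff_binomialPoly (a m : ℕ) : (binomialPoly K a m).coeff m = (a : K) ^ m / m ! := by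
  have := coeff_prod_of_natDegree_le (s := range m) (fun j => C (a : K) * X + C ((j : K) + 1)) 1
    fun _ _ => natDegree_linear_le
  simp only [card_range, mul_one, coeff_add, coeff_C_mul_X, coeff_C_succ, add_zero, if_true,
    prod_const] at this
  rw [binomialPoly, coeff_C_mul, this, inv_mul_eq_div]

variable [CharZero K]

theorem eval_binomialPoly (a m ν : ℕ) :
    (binomialPoly K a m).eval (ν : K) = ((a * ν + m).choose m : K) := by
  have hfac : (m ! : K) ≠ 0 := by exact_mod_cast m.factorial_ne_zero
  have hprod : ((a * ν + 1).ascFactorial m : K) = ∏ j ∈ range m, ((a : K) * ν + (j + 1)) := by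
    rw [ascFactorial_eq_prod_range]
    push_cast
    exact prod_congr rfl fun _ _ => by ring
  rw [binomialPoly, eval_mul, eval_C, eval_prod]
  simp only [eval_add, eval_mul, eval_C, eval_X]
  rw [← hprod, ascFactorial_eq_factorial_mul_choose]
  push_cast
  field_simp

variable (K) in
theorem exists_choose_mul_add_eq_sum_choose (μ n : ℕ) :
    ∃ a : ℕ → K, a n = (μ : K) ^ n ∧
      ∀ ν : ℕ, ((μ * ν + n).choose n : K) = ∑ m ∈ range (n + 1), a m * ((ν + m).choose m : K) := by
  have hcoeff (m : ℕ) : (binomialPoly K 1 m).coeff m ≠ 0 := by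
    rw [coeff_binomialPoly]
    simp [m.factorial_ne_zero]
  obtain ⟨a, han, hsum⟩ := exists_eq_sum_C_mul_of_natDegree_le (natDegree_binomialPoly_le 1)
    hcoeff n _ (natDegree_binomialPoly_le μ n)
  refine ⟨a, ?_, fun ν => ?_⟩
  · rw [han, coeff_binomialPoly, coeff_binomialPoly]
    simp [n.factorial_ne_zero]
  · rw [← eval_binomialPoly, hsum, eval_finsetSum]
    simp only [eval_mul, eval_C, eval_binomialPoly, one_mul]

end Polynomial

theorem norm_sum_mul_conj_sq_le {ι : Type*} (s : Finset ι) (u v : ι → ℂ) :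
    ‖∑ i ∈ s, u i * conj (v i)‖ ^ 2 ≤ (∑ i ∈ s, ‖u i‖ ^ 2) * ∑ i ∈ s, ‖v i‖ ^ 2 := by
  calc ‖∑ i ∈ s, u i * conj (v i)‖ ^ 2 ≤ (∑ i ∈ s, ‖u i‖ * ‖v i‖) ^ 2 := by
        gcongr
        refine (norm_sum_le _ _).trans_eq ?_
        simp
    _ ≤ _ := sum_mul_sq_le_sq_mul_sq _ _ _

theorem norm_one_add_sum_mul_conj_sq_le {n : ℕ} (z w : Fin n → ℂ) :
    ‖1 + ∑ i, z i * conj (w i)‖ ^ 2 ≤ (1 + ∑ i, ‖z i‖ ^ 2) * (1 + ∑ i, ‖w i‖ ^ 2) := by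
  simpa [Fin.sum_univ_succ] using
    norm_sum_mul_conj_sq_le univ (Fin.cons 1 z : Fin (n + 1) → ℂ) (Fin.cons 1 w)

theorem norm_mul_conj_mul_pow_lt_one {x y s : ℂ} {A B : ℝ} {μ : ℕ} (hA : 0 ≤ A)
    (hs : ‖s‖ ^ 2 ≤ A * B) (hx : ‖x‖ ^ 2 * A ^ μ < 1) (hy : ‖y‖ ^ 2 * B ^ μ < 1) :
    ‖x * conj y * s ^ μ‖ < 1 := by
  refine (sq_lt_one_iff₀ (norm_nonneg _)).1 ?_
  calc ‖x * conj y * s ^ μ‖ ^ 2 = ‖x‖ ^ 2 * ‖y‖ ^ 2 * (‖s‖ ^ 2) ^ μ := by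
        simp only [norm_mul, norm_pow, Complex.norm_conj]; ring
    _ ≤ ‖x‖ ^ 2 * ‖y‖ ^ 2 * (A * B) ^ μ := by gcongr
    _ = (‖x‖ ^ 2 * A ^ μ) * (‖y‖ ^ 2 * B ^ μ) := by ring
    _ < 1 := mul_lt_one_of_nonneg_of_lt_one_left (by positivity) hx hy.le

theorem one_div_one_sub_pow {K : Type*} [Field K] (t : K) (k : ℕ) :
    1 / (1 - t) ^ k = (-1) ^ k * (t - 1) ^ (-(k : ℤ)) := by
  rw [zpow_neg, zpow_natCast, ← neg_sub, neg_pow, one_div, mul_inv, ← inv_pow, inv_neg, inv_one]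

theorem hasSum_sum_mul_choose_mul_geometric {t : ℂ} (ht : ‖t‖ < 1) (a : ℕ → ℂ) (N : ℕ) :
    HasSum (fun ν : ℕ => (∑ m ∈ range (N + 1), a m * ((ν + m).choose m : ℂ)) * t ^ ν)
      (∑ m ∈ range (N + 1), (-1) ^ (m + 1) * a m * (t - 1) ^ (-((m : ℤ) + 1))) := by
  simp_rw [sum_mul, mul_assoc]
  refine hasSum_sum fun m _ => ?_
  have := (hasSum_choose_mul_geometric_of_norm_lt_one m ht).mul_left (a m)
  rw [one_div_one_sub_pow, mul_left_comm] at this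
  push_cast at this
  exact this

theorem stmt_7_general (n μ : ℕ) :
    ∃ c : ℕ → ℝ,
      c n = (-1) ^ (n + 1) * (μ : ℝ) ^ n ∧
      ∀ (z w : Fin n → ℂ) (lam β : ℂ),
        ‖lam‖ ^ 2 * (1 + ∑ i, ‖z i‖ ^ 2) ^ μ < 1 →
        ‖β‖ ^ 2 * (1 + ∑ i, ‖w i‖ ^ 2) ^ μ < 1 →
        HasSum
          (fun ν : ℕ => ((Nat.choose (μ * ν + n) n : ℕ) : ℂ) *
            (1 + ∑ i, z i * (starRingEnd ℂ) (w i)) ^ (μ * ν) *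
            (lam * (starRingEnd ℂ) β) ^ ν)
          (∑ m ∈ Finset.range (n + 1), ((c m : ℝ) : ℂ) *
            (lam * (starRingEnd ℂ) β * (1 + ∑ i, z i * (starRingEnd ℂ) (w i)) ^ μ - 1)
              ^ (-((m : ℤ) + 1))) := by
  obtain ⟨a, han, hchoose⟩ := exists_choose_mul_add_eq_sum_choose ℝ μ n
  refine ⟨fun m => (-1) ^ (m + 1) * a m, by simp only [han], fun z w lam β hz hw => ?_⟩
  set s := 1 + ∑ i, z i * conj (w i)
  have ht : ‖lam * conj β * s ^ μ‖ < 1 :=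
    norm_mul_conj_mul_pow_lt_one (by positivity) (norm_one_add_sum_mul_conj_sq_le z w) hz hw
  convert hasSum_sum_mul_choose_mul_geometric ht (fun m => (a m : ℂ)) n using 1
  · funext ν
    have hchoose' : ((μ * ν + n).choose n : ℂ) =
        ∑ m ∈ range (n + 1), (a m : ℂ) * ((ν + m).choose m : ℂ) := by
      exact_mod_cast hchoose ν
    rw [hchoose', mul_pow (lam * conj β), ← pow_mul, mul_comm μ ν]
    ring
  · push_cast
    rfl

/-- Theorem 3.2A for `M = ℂPⁿ`: the Szegő kernel of the circle bundle `S(L^{*μ})`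
has an expansion without logarithmic term. -/
theorem stmt_7 (n μ : ℕ) (hn : 1 ≤ n) (hμ : 1 ≤ μ) :
    ∃ c : ℕ → ℝ,
      c n = (-1) ^ (n + 1) * (μ : ℝ) ^ n ∧
      ∀ (z w : Fin n → ℂ) (lam β : ℂ),
        ‖lam‖ ^ 2 * (1 + ∑ i, ‖z i‖ ^ 2) ^ μ < 1 →
        ‖β‖ ^ 2 * (1 + ∑ i, ‖w i‖ ^ 2) ^ μ < 1 →
        HasSum
          (fun ν : ℕ => ((Nat.choose (μ * ν + n) n : ℕ) : ℂ) *
            (1 + ∑ i, z i * (starRingEnd ℂ) (w i)) ^ (μ * ν) *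
            (lam * (starRingEnd ℂ) β) ^ ν)
          (∑ m ∈ Finset.range (n + 1), ((c m : ℝ) : ℂ) *
            (lam * (starRingEnd ℂ) β * (1 + ∑ i, z i * (starRingEnd ℂ) (w i)) ^ μ - 1)
              ^ (-((m : ℤ) + 1))) :=
  stmt_7_general n μ
end

section
/- Let l and k be integers with 1 ≤ k ≤ l − k, set n = k(l−k), and let P ∈ ℚ[X] be the unique polynomial with P · ∏_{i=1}^{k}(1 − X^i) · ∏_{i=1}^{l−k}(1 − X^i) = ∏_{i=1}^{l}(1 − X^i). If the coefficient of X^{j−1} in P equals the coefficient of X^{j} in P for every j = 1, …, n, then k = 1. -/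
open Polynomial

/-!
Work modulo `X ^ 3`. For `m ≥ 2` the product `∏_{i=1}^{m} (1 - X^i)` is `1 - X - X²` there,
while equal consecutive coefficients force `P ≡ 1 + X + X²` once `n ≥ 2`. If `k ≥ 2` then also
`l - k ≥ 2`, so the defining identity would give `(1 + X + X²)(1 - X - X²)² ≡ 1 - X - X²`,
which fails in degree `2`.
-/

section ModXCube

variable {R : Type*} [CommRing R]

theorem prod_one_sub_X_pow_sModEq (m : ℕ) (hm : 2 ≤ m) :
    ∏ i ∈ Finset.range m, (1 - (X : R[X]) ^ (i + 1)) ≡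
      1 - X - X ^ 2 [SMOD Ideal.span {(X : R[X]) ^ 3}] := by
  induction m, hm using Nat.le_induction with
  | base =>
    rw [SModEq.sub_mem, Ideal.mem_span_singleton]
    exact ⟨1, by simp only [Finset.prod_range_succ, Finset.prod_range_zero]; ring⟩
  | succ m hm ih =>
    have hX : 1 - (X : R[X]) ^ (m + 1) ≡ 1 [SMOD Ideal.span {(X : R[X]) ^ 3}] := by
      rw [SModEq.sub_mem, Ideal.mem_span_singleton, sub_sub_cancel_left]
      exact (pow_dvd_pow X (by omega)).neg_right
    simpa only [Finset.prod_range_succ, mul_one] using ih.mul hX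

theorem sModEq_one_add_X_add_X_sq {p : R[X]} (h₀ : p.coeff 0 = 1) (h₁ : p.coeff 1 = 1)
    (h₂ : p.coeff 2 = 1) : p ≡ 1 + X + X ^ 2 [SMOD Ideal.span {(X : R[X]) ^ 3}] := by
  rw [SModEq.sub_mem, Ideal.mem_span_singleton, X_pow_dvd_iff]
  intro d hd
  interval_cases d <;> simp [h₀, h₁, h₂, coeff_X, coeff_one]

theorem not_sModEq_one_add_X_add_X_sq_mul [Nontrivial R] :
    ¬ (1 + X + X ^ 2) * ((1 - X - X ^ 2) * (1 - X - X ^ 2)) ≡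
      1 - X - X ^ 2 [SMOD Ideal.span {(X : R[X]) ^ 3}] := by
  rw [SModEq.sub_mem, Ideal.mem_span_singleton, X_pow_dvd_iff]
  intro h
  have hexpand : (1 + X + X ^ 2) * ((1 - X - X ^ 2) * (1 - X - X ^ 2)) - (1 - X - X ^ 2) =
      -X ^ 2 - X ^ 3 + 2 * X ^ 4 + 3 * X ^ 5 + (X : R[X]) ^ 6 := by ring
  simpa [hexpand, coeff_X_pow, coeff_X] using h 2 (by norm_num)

end ModXCube

/-- If the Poincaré polynomial of the Grassmannian `U(l)/U(k)×U(l−k)` has equal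
consecutive coefficients in degrees `0, …, n = k(l−k)`, then `k = 1`. -/
theorem stmt_14 (l k : ℕ) (hk : 1 ≤ k) (hkl : k ≤ l - k) (n : ℕ) (hn : n = k * (l - k))
    (P : Polynomial ℚ)
    (hP : P * ((∏ i ∈ Finset.range k, (1 - (X : Polynomial ℚ) ^ (i + 1))) *
          ∏ i ∈ Finset.range (l - k), (1 - (X : Polynomial ℚ) ^ (i + 1)))
        = ∏ i ∈ Finset.range l, (1 - (X : Polynomial ℚ) ^ (i + 1)))
    (hcoeff : ∀ j, 1 ≤ j → j ≤ n → P.coeff (j - 1) = P.coeff j) :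
    k = 1 := by
  by_contra hk₁
  have hk₂ : 2 ≤ k := by omega
  have hlk₂ : 2 ≤ l - k := hk₂.trans hkl
  have hn₂ : 2 ≤ n := hn ▸ le_trans (by norm_num) (Nat.mul_le_mul hk₂ hlk₂)
  have hP₀ : P.coeff 0 = 1 := by
    simpa [coeff_zero_eq_eval_zero, eval_prod] using congrArg (eval 0) hP
  have hP₁ : P.coeff 1 = 1 := hP₀ ▸ (hcoeff 1 le_rfl (by omega)).symm
  have hP₂ : P.coeff 2 = 1 := hP₁ ▸ (hcoeff 2 (by omega) hn₂).symm
  apply not_sModEq_one_add_X_add_X_sq_mul (R := ℚ)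
  calc (1 + X + X ^ 2) * ((1 - X - X ^ 2) * (1 - X - X ^ 2))
      ≡ P * ((∏ i ∈ Finset.range k, (1 - (X : ℚ[X]) ^ (i + 1))) *
          ∏ i ∈ Finset.range (l - k), (1 - (X : ℚ[X]) ^ (i + 1)))
          [SMOD Ideal.span {(X : ℚ[X]) ^ 3}] :=
        ((sModEq_one_add_X_add_X_sq hP₀ hP₁ hP₂).mul
          ((prod_one_sub_X_pow_sModEq k hk₂).mul (prod_one_sub_X_pow_sModEq _ hlk₂))).symm
    _ = ∏ i ∈ Finset.range l, (1 - (X : ℚ[X]) ^ (i + 1)) := hP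
    _ ≡ 1 - X - X ^ 2 [SMOD Ideal.span {(X : ℚ[X]) ^ 3}] :=
        prod_one_sub_X_pow_sModEq l (by omega)
end
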